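/- arXiv:2405.07482 — 2 statements merged into one kernel-verified Lean document; each statement's English description precedes it below -/
import Mathlib

section
/- Let p ≥ 1, d ≥ 1, K ≥ 2, and let μ_1, …, μ_K be probability measures on ℝ^d with finite p-th moments, with θ ↦ max_{i,j} W_p^p(θ♯μ_i, θ♯μ_j) measurable on S^{d−1}. Then SMW_p^p(μ_1, …, μ_K; c) ≥ ∫_{S^{d−1}} max_{1≤i,j≤K} W_p^p(θ♯μ_i, θ♯μ_j) dσ(θ). -/
open MeasureTheory Metric Real

noncomputable section

/-- `ℝ^d`. -/
abbrev Rd (d : ℕ) := EuclideanSpace ℝ (Fin d)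

/-- The uniform probability measure `σ` on the unit sphere `S^{d-1} ⊂ ℝ^d`,
obtained by normalizing the surface measure coming from the Lebesgue measure. -/
noncomputable def uniformSphere (d : ℕ) :
    Measure (sphere (0 : Rd d) 1) :=
  ((volume : Measure (Rd d)).toSphere Set.univ)⁻¹ • (volume : Measure (Rd d)).toSphere

/-- A measure on `ℝ^d` has finite `p`-th moment. -/
def FiniteMoment {d : ℕ} (p : ℝ) (μ : Measure (Rd d)) : Prop :=
  Integrable (fun x => ‖x‖ ^ p) μ

/-- A measure on `ℝ` has finite `p`-th moment. -/
def FiniteMoment1 (p : ℝ) (ν : Measure ℝ) : Prop :=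
  Integrable (fun x => |x| ^ p) ν

/-- Pushforward `θ♯μ` of `μ` under `x ↦ ⟪θ, x⟫`. -/
def proj {d : ℕ} (θ : sphere (0 : Rd d) 1) (μ : Measure (Rd d)) : Measure ℝ :=
  μ.map (fun x => inner ℝ (θ : Rd d) x)

/-- The set of couplings of two measures on `ℝ`. -/
def Coupling (ν₁ ν₂ : Measure ℝ) : Set (Measure (ℝ × ℝ)) :=
  {γ | IsProbabilityMeasure γ ∧ γ.map Prod.fst = ν₁ ∧ γ.map Prod.snd = ν₂}

/-- One-dimensional `p`-Wasserstein cost `W_p^p`. -/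
def Wpp (p : ℝ) (ν₁ ν₂ : Measure ℝ) : ℝ :=
  sInf ((fun γ : Measure (ℝ × ℝ) => ∫ q, |q.1 - q.2| ^ p ∂γ) '' Coupling ν₁ ν₂)

/-- Sliced `p`-Wasserstein cost `SW_p^p`. -/
def SWpp {d : ℕ} (p : ℝ) (μ₁ μ₂ : Measure (Rd d)) : ℝ :=
  ∫ θ, Wpp p (proj θ μ₁) (proj θ μ₂) ∂(uniformSphere d)

/-- The set of multi-marginal couplings of `K` measures on `ℝ^d`. -/
def MCoupling {d K : ℕ} (μs : Fin K → Measure (Rd d)) : Set (Measure (Fin K → Rd d)) :=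
  {pl | IsProbabilityMeasure pl ∧ ∀ k, pl.map (fun x => x k) = μs k}

/-- The inner multi-marginal transport cost along direction `θ`, with the maximal
ground metric `c(t₁,…,t_K) = max_{i,j} |t_i - t_j|`. -/
def SMWtheta {d K : ℕ} (p : ℝ) (μs : Fin K → Measure (Rd d))
    (θ : sphere (0 : Rd d) 1) : ℝ :=
  sInf ((fun pl : Measure (Fin K → Rd d) =>
      ∫ x, (⨆ i, ⨆ j, |inner ℝ (θ : Rd d) (x i) - inner ℝ (θ : Rd d) (x j)|) ^ p ∂pl)
    '' MCoupling μs)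

/-- Sliced multi-marginal Wasserstein cost `SMW_p^p` with the maximal ground metric. -/
def SMWpp {d K : ℕ} (p : ℝ) (μs : Fin K → Measure (Rd d)) : ℝ :=
  ∫ θ, SMWtheta p μs θ ∂(uniformSphere d)

/-!
For a direction `θ` and a multi-marginal coupling `π`, pushing `π` forward along
`x ↦ (⟨θ, x_i⟩, ⟨θ, x_j⟩)` gives a coupling of `θ♯μ_i` and `θ♯μ_j`, and its cost is at most that
of `π` because `|t_i - t_j| ≤ max_{k,l} |t_k - t_l|`. So the integrands compare pointwise, and the
analytic work is the integrability of the right-hand integrand: it is an infimum of functions of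
`θ` that are continuous by dominated convergence, with the bound
`(max_{k,l} |t_k - t_l|)^p ≤ 2^p ∑_k |t_k|^p` and finite `p`-th moments; hence it is upper
semicontinuous, so measurable, and it is bounded.
-/

instance (d : ℕ) : IsFiniteMeasure (uniformSphere d) := by
  constructor
  rw [uniformSphere, Measure.smul_apply, smul_eq_mul]
  exact (ENNReal.inv_mul_le_one _).trans_lt ENNReal.one_lt_top

lemma Wpp_nonneg (p : ℝ) (ν₁ ν₂ : Measure ℝ) : 0 ≤ Wpp p ν₁ ν₂ :=
  Real.sInf_nonneg <| by
    rintro _ ⟨γ, -, rfl⟩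
    exact integral_nonneg fun _ => Real.rpow_nonneg (abs_nonneg _) p

/-- Every random pair `(a, b)` is a coupling of its marginals. -/
lemma Wpp_map_le_integral {X : Type*} [MeasurableSpace X] (P : Measure X)
    [IsProbabilityMeasure P] {a b : X → ℝ} (ha : Measurable a) (hb : Measurable b) (p : ℝ) :
    Wpp p (P.map a) (P.map b) ≤ ∫ x, |a x - b x| ^ p ∂P := by
  have hab : Measurable fun x => (a x, b x) := ha.prodMk hb
  have hγ : P.map (fun x => (a x, b x)) ∈ Coupling (P.map a) (P.map b) :=
    ⟨Measure.isProbabilityMeasure_map hab.aemeasurable,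
      by rw [Measure.map_map measurable_fst hab]; rfl,
      by rw [Measure.map_map measurable_snd hab]; rfl⟩
  calc Wpp p (P.map a) (P.map b)
      ≤ ∫ q, |q.1 - q.2| ^ p ∂(P.map fun x => (a x, b x)) := by
        refine csInf_le ⟨0, ?_⟩ (Set.mem_image_of_mem _ hγ)
        rintro _ ⟨γ, -, rfl⟩
        exact integral_nonneg fun _ => Real.rpow_nonneg (abs_nonneg _) p
    _ = ∫ x, |a x - b x| ^ p ∂P :=
        integral_map hab.aemeasurable
          ((measurable_fst.sub measurable_snd).abs.pow_const p).aestronglyMeasurable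

section Spread

variable {ι : Type*}

/-- The maximal ground metric `c(t) = max_{i,j} |t_i - t_j|`. -/
def spread (t : ι → ℝ) : ℝ := ⨆ i, ⨆ j, |t i - t j|

lemma spread_nonneg (t : ι → ℝ) : 0 ≤ spread t :=
  Real.iSup_nonneg fun _ => Real.iSup_nonneg fun _ => abs_nonneg _

lemma abs_sub_le_spread [Finite ι] (t : ι → ℝ) (i j : ι) : |t i - t j| ≤ spread t :=
  (le_ciSup (Set.finite_range _).bddAbove j).trans
    (le_ciSup (f := fun i => ⨆ j, |t i - t j|) (Set.finite_range _).bddAbove i)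

lemma spread_le_two_mul {t : ι → ℝ} {s : ℝ} (hs : 0 ≤ s) (ht : ∀ i, |t i| ≤ s) :
    spread t ≤ 2 * s :=
  Real.iSup_le (fun i => Real.iSup_le (fun j => (abs_sub _ _).trans (by linarith [ht i, ht j]))
    (by positivity)) (by positivity)

lemma spread_le_add_dist [Fintype ι] (t u : ι → ℝ) : spread t ≤ spread u + 2 * dist t u := by
  have hu := spread_nonneg u
  refine Real.iSup_le (fun i => Real.iSup_le (fun j => ?_) (by positivity)) (by positivity)
  have hi : |t i - u i| ≤ dist t u := dist_le_pi_dist t u i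
  have hj : |t j - u j| ≤ dist t u := dist_le_pi_dist t u j
  have hij := abs_sub_le_spread u i j
  rw [abs_le] at *
  constructor <;> linarith

lemma lipschitzWith_spread [Fintype ι] : LipschitzWith 2 (spread : (ι → ℝ) → ℝ) :=
  LipschitzWith.of_le_add_mul 2 fun t u => by exact_mod_cast spread_le_add_dist t u

lemma spread_rpow_le_sum [Fintype ι] {p : ℝ} (hp : 0 < p) (t : ι → ℝ) :
    spread t ^ p ≤ 2 ^ p * ∑ i, |t i| ^ p := by
  have hsum : 0 ≤ ∑ i, |t i| ^ p := by positivity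
  set s := (∑ i, |t i| ^ p) ^ p⁻¹
  have hts : ∀ i, |t i| ≤ s := fun i =>
    (Real.le_rpow_inv_iff_of_pos (abs_nonneg _) hsum hp).2 <|
      Finset.single_le_sum (f := fun i => |t i| ^ p) (fun _ _ => by positivity) (Finset.mem_univ i)
  calc spread t ^ p ≤ (2 * s) ^ p :=
        Real.rpow_le_rpow (spread_nonneg t) (spread_le_two_mul (by positivity) hts) hp.le
    _ = 2 ^ p * ∑ i, |t i| ^ p := by
        rw [Real.mul_rpow zero_le_two (by positivity), Real.rpow_inv_rpow hsum hp.ne']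

end Spread

section Projection

variable {ι E : Type*} [Fintype ι] [NormedAddCommGroup E] [InnerProductSpace ℝ E] {p : ℝ}

lemma spread_inner_rpow_le (hp : 0 < p) {θ : E} (hθ : ‖θ‖ = 1) (x : ι → E) :
    spread (fun i => inner ℝ θ (x i)) ^ p ≤ 2 ^ p * ∑ i, ‖x i‖ ^ p := by
  refine (spread_rpow_le_sum hp _).trans ?_
  gcongr with i
  simpa [hθ] using abs_real_inner_le_norm θ (x i)

lemma continuous_spread_inner_rpow {α : Type*} [TopologicalSpace α] {f : α → E} {g : α → ι → E}
    (hf : Continuous f) (hg : Continuous g) (hp : 0 ≤ p) :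
    Continuous fun a => spread (fun i => inner ℝ (f a) (g a i)) ^ p :=
  (lipschitzWith_spread.continuous.comp <| continuous_pi fun i =>
    hf.inner ((continuous_apply i).comp hg)).rpow_const fun _ => Or.inr hp

end Projection

section Coupling

variable {d K : ℕ} {p : ℝ} {μs : Fin K → Measure (Rd d)} {pl : Measure (Fin K → Rd d)}

lemma pi_mem_MCoupling (hμs : ∀ k, IsProbabilityMeasure (μs k)) :
    Measure.pi μs ∈ MCoupling μs :=
  ⟨inferInstance, fun k => (measurePreserving_eval μs k).map_eq⟩

lemma map_inner_eq_proj (hpl : pl ∈ MCoupling μs) (θ : sphere (0 : Rd d) 1) (k : Fin K) :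
    pl.map (fun x => inner ℝ (θ : Rd d) (x k)) = proj θ (μs k) := by
  rw [proj, ← hpl.2 k]
  exact (Measure.map_map (continuous_const.inner continuous_id).measurable
    (measurable_pi_apply k)).symm

lemma integrable_moment_bound (hp : 0 ≤ p) (hμsm : ∀ k, FiniteMoment p (μs k))
    (hpl : pl ∈ MCoupling μs) :
    Integrable (fun x : Fin K → Rd d => 2 ^ p * ∑ k, ‖x k‖ ^ p) pl := by
  refine (integrable_finsetSum _ fun k _ => ?_).const_mul _
  have hμ : Integrable (fun y : Rd d => ‖y‖ ^ p) (pl.map fun x => x k) := by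
    rw [hpl.2 k]; exact hμsm k
  exact (integrable_map_measure
    (continuous_norm.rpow_const fun _ => Or.inr hp).aestronglyMeasurable
    (measurable_pi_apply k).aemeasurable).mp hμ

def projCost (p : ℝ) (pl : Measure (Fin K → Rd d)) (θ : sphere (0 : Rd d) 1) : ℝ :=
  ∫ x, spread (fun i => inner ℝ (θ : Rd d) (x i)) ^ p ∂pl

lemma integrable_spread_inner_rpow (hp : 0 < p) (hμsm : ∀ k, FiniteMoment p (μs k))
    (hpl : pl ∈ MCoupling μs) (θ : sphere (0 : Rd d) 1) :
    Integrable (fun x : Fin K → Rd d => spread (fun i => inner ℝ (θ : Rd d) (x i)) ^ p) pl := by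
  refine (integrable_moment_bound hp.le hμsm hpl).mono'
    (continuous_spread_inner_rpow continuous_const continuous_id hp.le).aestronglyMeasurable
    (ae_of_all _ fun x => ?_)
  rw [Real.norm_of_nonneg (Real.rpow_nonneg (spread_nonneg _) p)]
  exact spread_inner_rpow_le hp (norm_eq_of_mem_sphere θ) x

lemma continuous_projCost (hp : 0 < p) (hμsm : ∀ k, FiniteMoment p (μs k))
    (hpl : pl ∈ MCoupling μs) : Continuous (projCost p pl) := by
  unfold projCost
  exact continuous_of_dominated
    (fun θ => (integrable_spread_inner_rpow hp hμsm hpl θ).aestronglyMeasurable)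
    (fun θ => ae_of_all _ fun x => by
      rw [Real.norm_of_nonneg (Real.rpow_nonneg (spread_nonneg _) p)]
      exact spread_inner_rpow_le hp (norm_eq_of_mem_sphere θ) x)
    (integrable_moment_bound hp.le hμsm hpl)
    (ae_of_all _ fun _ =>
      continuous_spread_inner_rpow continuous_subtype_val continuous_const hp.le)

lemma Wpp_proj_le_projCost (hp : 0 < p) (hμsm : ∀ k, FiniteMoment p (μs k))
    (hpl : pl ∈ MCoupling μs) (θ : sphere (0 : Rd d) 1) (i j : Fin K) :
    Wpp p (proj θ (μs i)) (proj θ (μs j)) ≤ projCost p pl θ := by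
  have := hpl.1
  have hinner : ∀ k, Measurable fun x : Fin K → Rd d => inner ℝ (θ : Rd d) (x k) := fun k =>
    (continuous_const.inner (continuous_apply k)).measurable
  rw [← map_inner_eq_proj hpl θ i, ← map_inner_eq_proj hpl θ j]
  refine (Wpp_map_le_integral pl (hinner i) (hinner j) p).trans <|
    integral_mono_of_nonneg (ae_of_all _ fun _ => by positivity)
      (integrable_spread_inner_rpow hp hμsm hpl θ) (ae_of_all _ fun x => ?_)
  exact Real.rpow_le_rpow (abs_nonneg _)
    (abs_sub_le_spread (fun k => inner ℝ (θ : Rd d) (x k)) i j) hp.le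

end Coupling

section SMWtheta

variable {d K : ℕ} {p : ℝ} {μs : Fin K → Measure (Rd d)}

lemma SMWtheta_eq_iInf (μs : Fin K → Measure (Rd d)) :
    SMWtheta p μs = fun θ => ⨅ pl : MCoupling μs, projCost p pl.1 θ := by
  ext θ
  exact sInf_image'

lemma projCost_nonneg (pl : Measure (Fin K → Rd d)) (θ : sphere (0 : Rd d) 1) :
    0 ≤ projCost p pl θ :=
  integral_nonneg fun _ => Real.rpow_nonneg (spread_nonneg _) p

lemma SMWtheta_nonneg (θ : sphere (0 : Rd d) 1) : 0 ≤ SMWtheta p μs θ := by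
  rw [SMWtheta_eq_iInf]
  exact Real.iInf_nonneg fun pl => projCost_nonneg _ θ

lemma SMWtheta_le_projCost {pl : Measure (Fin K → Rd d)} (hpl : pl ∈ MCoupling μs)
    (θ : sphere (0 : Rd d) 1) : SMWtheta p μs θ ≤ projCost p pl θ := by
  rw [SMWtheta_eq_iInf]
  exact ciInf_le ⟨0, Set.forall_mem_range.2 fun pl' : MCoupling μs => projCost_nonneg pl'.1 θ⟩
    ⟨pl, hpl⟩

/-- An infimum of continuous functions is upper semicontinuous, hence measurable. -/
lemma measurable_SMWtheta (hp : 0 < p) (hμsm : ∀ k, FiniteMoment p (μs k)) :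
    Measurable (SMWtheta p μs) := by
  rw [SMWtheta_eq_iInf]
  refine (upperSemicontinuous_ciInf (fun θ => ⟨0, ?_⟩)
    fun pl => (continuous_projCost hp hμsm pl.2).upperSemicontinuous).measurable
  rintro _ ⟨pl, rfl⟩
  exact projCost_nonneg _ θ

lemma integrable_SMWtheta (hp : 0 < p) (hμs : ∀ k, IsProbabilityMeasure (μs k))
    (hμsm : ∀ k, FiniteMoment p (μs k)) : Integrable (SMWtheta p μs) (uniformSphere d) := by
  refine .of_bound (measurable_SMWtheta hp hμsm).aestronglyMeasurable
    (∫ x, 2 ^ p * ∑ k, ‖x k‖ ^ p ∂(Measure.pi μs)) (ae_of_all _ fun θ => ?_)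
  rw [Real.norm_of_nonneg (SMWtheta_nonneg θ)]
  refine (SMWtheta_le_projCost (pi_mem_MCoupling hμs) θ).trans <|
    integral_mono_of_nonneg (ae_of_all _ fun _ => Real.rpow_nonneg (spread_nonneg _) p)
      (integrable_moment_bound hp.le hμsm (pi_mem_MCoupling hμs))
      (ae_of_all _ fun x => spread_inner_rpow_le hp (norm_eq_of_mem_sphere θ) x)

lemma iSup_Wpp_proj_le_SMWtheta (hp : 0 < p) (hμs : ∀ k, IsProbabilityMeasure (μs k))
    (hμsm : ∀ k, FiniteMoment p (μs k)) (θ : sphere (0 : Rd d) 1) :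
    ⨆ i, ⨆ j, Wpp p (proj θ (μs i)) (proj θ (μs j)) ≤ SMWtheta p μs θ := by
  refine Real.iSup_le (fun i => Real.iSup_le (fun j => ?_) (SMWtheta_nonneg θ))
    (SMWtheta_nonneg θ)
  rw [SMWtheta_eq_iInf]
  have : Nonempty (MCoupling μs) := ⟨⟨_, pi_mem_MCoupling hμs⟩⟩
  exact le_ciInf fun pl => Wpp_proj_le_projCost hp hμsm pl.2 θ i j

end SMWtheta

theorem smw_ge_integral_max_pairwise_general (p : ℝ) (hp : 1 ≤ p) (d : ℕ)
    (K : ℕ) (μs : Fin K → Measure (Rd d))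
    (hμs : ∀ k, IsProbabilityMeasure (μs k)) (hμsm : ∀ k, FiniteMoment p (μs k)) :
    ∫ θ, (⨆ i, ⨆ j, Wpp p (proj θ (μs i)) (proj θ (μs j))) ∂(uniformSphere d) ≤
      SMWpp p μs :=
  integral_mono_of_nonneg
    (ae_of_all _ fun _ => Real.iSup_nonneg fun _ => Real.iSup_nonneg fun _ => Wpp_nonneg _ _ _)
    (integrable_SMWtheta (by linarith) hμs hμsm)
    (ae_of_all _ (iSup_Wpp_proj_le_SMWtheta (by linarith) hμs hμsm))

/-- The sliced multi-marginal Wasserstein cost with the maximal ground metric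
dominates the sphere-average of the largest pairwise projected Wasserstein cost. -/
theorem smw_ge_integral_max_pairwise (p : ℝ) (hp : 1 ≤ p) (d : ℕ) (hd : 1 ≤ d)
    (K : ℕ) (hK : 2 ≤ K) (μs : Fin K → Measure (Rd d))
    (hμs : ∀ k, IsProbabilityMeasure (μs k)) (hμsm : ∀ k, FiniteMoment p (μs k))
    (hmeas : Measurable fun θ : sphere (0 : Rd d) 1 =>
      ⨆ i, ⨆ j, Wpp p (proj θ (μs i)) (proj θ (μs j))) :
    ∫ θ, (⨆ i, ⨆ j, Wpp p (proj θ (μs i)) (proj θ (μs j))) ∂(uniformSphere d) ≤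
      SMWpp p μs :=
  smw_ge_integral_max_pairwise_general p hp d K μs hμs hμsm
end
end

section
/- Let p ≥ 1, d ≥ 1, K ≥ 2, and let μ, μ_1, …, μ_K be probability measures on ℝ^d with finite p-th moments. Set g(θ) := max_{1≤k≤K} W_p^p(θ♯μ, θ♯μ_k), assumed measurable, with each θ ↦ W_p^p(θ♯μ, θ♯μ_k), g, and g·exp(g) σ-integrable on S^{d−1}. Then SF(μ; μ_{1:K}) ≤ ESF(μ; μ_{1:K}), i.e., max_{1≤k≤K} ∫_{S^{d−1}} W_p^p(θ♯μ, θ♯μ_k) dσ(θ) ≤ (∫_{S^{d−1}} g(θ) exp(g(θ)) dσ(θ)) / (∫_{S^{d−1}} exp(g(θ)) dσ(θ)). -/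
open MeasureTheory Metric Real

noncomputable section

/-! The maximum of the integrals is at most the integral of the maximum `g`, and
`∫ g ≤ (∫ g eᵍ) / ∫ eᵍ` is Chebyshev's integral inequality for the similarly ordered functions
`g` and `exp ∘ g` under the probability measure `σ`: with `m = ∫ g`, integrate
`0 ≤ (g - m) (eᵍ - eᵐ)`, in which the term `eᵐ (g - m)` has integral zero. -/

lemma Real.exp_le_exp_one_add_abs_mul_exp (y : ℝ) : exp y ≤ exp 1 + |y * exp y| := by
  rcases le_total y 1 with hy | hy
  · linarith [exp_le_exp.mpr hy, abs_nonneg (y * exp y)]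
  · nlinarith [exp_pos y, le_abs_self (y * exp y), exp_pos 1]

section Integral

variable {α : Type*} [MeasurableSpace α] {σ : Measure α} {g : α → ℝ}

lemma MeasureTheory.Integrable.exp_of_integrable_mul_exp [IsFiniteMeasure σ]
    (hg : AEStronglyMeasurable g σ) (hge : Integrable (fun x => g x * exp (g x)) σ) :
    Integrable (fun x => exp (g x)) σ :=
  ((integrable_const (exp 1)).add hge.norm).mono' (continuous_exp.comp_aestronglyMeasurable hg)
    (.of_forall fun x => by
      simpa [abs_of_pos (exp_pos (g x))] using exp_le_exp_one_add_abs_mul_exp (g x))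

lemma integral_mul_integral_comp_le_integral_mul_comp [IsProbabilityMeasure σ] {φ : ℝ → ℝ}
    (hφ : Monotone φ) (hg : Integrable g σ) (hφg : Integrable (fun x => φ (g x)) σ)
    (hgφg : Integrable (fun x => g x * φ (g x)) σ) :
    (∫ x, g x ∂σ) * ∫ x, φ (g x) ∂σ ≤ ∫ x, g x * φ (g x) ∂σ := by
  set m := ∫ x, g x ∂σ
  have hpoint : 0 ≤ fun x => (g x - m) * (φ (g x) - φ m) := fun x =>
    (monotone_id.monovary hφ).sub_mul_sub_nonneg m (g x)
  have hgm : Integrable (fun x => g x - m) σ := hg.sub (integrable_const m)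
  have hφgm : Integrable (fun x => g x * φ (g x) - m * φ (g x)) σ :=
    hgφg.sub (hφg.const_mul m)
  have hexpand : ∫ x, (g x - m) * (φ (g x) - φ m) ∂σ
      = (∫ x, g x * φ (g x) ∂σ) - m * ∫ x, φ (g x) ∂σ := by
    have hsplit : ∀ x, (g x - m) * (φ (g x) - φ m)
        = (g x * φ (g x) - m * φ (g x)) - φ m * (g x - m) := fun x => by ring
    simp_rw [hsplit]
    rw [integral_sub hφgm (hgm.const_mul _), integral_sub hgφg (hφg.const_mul m),
      integral_const_mul, integral_const_mul, integral_sub hg (integrable_const m)]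
    simp [m]
  linarith [integral_nonneg (μ := σ) hpoint]

lemma integral_le_integral_mul_exp_div_integral_exp [IsProbabilityMeasure σ]
    (hg : Integrable g σ) (hge : Integrable (fun x => g x * exp (g x)) σ) :
    ∫ x, g x ∂σ ≤ (∫ x, g x * exp (g x) ∂σ) / ∫ x, exp (g x) ∂σ := by
  have hexp := hge.exp_of_integrable_mul_exp hg.aestronglyMeasurable
  rw [le_div_iff₀ (integral_exp_pos hexp)]
  exact integral_mul_integral_comp_le_integral_mul_comp exp_monotone hg hexp hge

lemma iSup_integral_le_integral_iSup {ι : Type*} [Finite ι] [Nonempty ι] {f : ι → α → ℝ}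
    (hf : ∀ i, Integrable (f i) σ) (hsup : Integrable (fun x => ⨆ i, f i x) σ) :
    ⨆ i, ∫ x, f i x ∂σ ≤ ∫ x, ⨆ i, f i x ∂σ :=
  ciSup_le fun i => integral_mono (hf i) hsup fun x =>
    le_ciSup (Set.finite_range fun j => f j x).bddAbove i

end Integral

instance isProbabilityMeasure_uniformSphere (d : ℕ) [NeZero d] :
    IsProbabilityMeasure (uniformSphere d) := by
  have : NeZero (volume : Measure (Rd d)).toSphere := ⟨Measure.toSphere_ne_zero _⟩
  unfold uniformSphere
  infer_instance

theorem sf_le_esf_general (p : ℝ) (d : ℕ) (hd : 1 ≤ d) (K : ℕ) (hK : 2 ≤ K)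
    (μ : Measure (Rd d)) (μs : Fin K → Measure (Rd d))
    (g : sphere (0 : Rd d) 1 → ℝ)
    (hg : g = fun θ => ⨆ k, Wpp p (proj θ μ) (proj θ (μs k)))
    (hkint : ∀ k, Integrable (fun θ => Wpp p (proj θ μ) (proj θ (μs k))) (uniformSphere d))
    (hgint : Integrable g (uniformSphere d))
    (hgeint : Integrable (fun θ => g θ * Real.exp (g θ)) (uniformSphere d)) :
    (⨆ k, ∫ θ, Wpp p (proj θ μ) (proj θ (μs k)) ∂(uniformSphere d)) ≤
      (∫ θ, g θ * Real.exp (g θ) ∂(uniformSphere d)) /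
        (∫ θ, Real.exp (g θ) ∂(uniformSphere d)) := by
  have : NeZero d := ⟨by omega⟩
  have : Nonempty (Fin K) := ⟨⟨0, by omega⟩⟩
  calc (⨆ k, ∫ θ, Wpp p (proj θ μ) (proj θ (μs k)) ∂(uniformSphere d))
      ≤ ∫ θ, g θ ∂(uniformSphere d) := by
        subst hg
        exact iSup_integral_le_integral_iSup hkint hgint
    _ ≤ _ := integral_le_integral_mul_exp_div_integral_exp hgint hgeint

/-- **(SF ≤ ESF).** With `g θ = max_k W_p^p(θ♯μ, θ♯μ_k)`, the s-MFSWB objective is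
at most the energy-based es-MFSWB objective:
`max_k ∫ W_p^p(θ♯μ, θ♯μ_k) dσ(θ) ≤ (∫ g·exp g dσ) / (∫ exp g dσ)`. -/
theorem sf_le_esf (p : ℝ) (hp : 1 ≤ p) (d : ℕ) (hd : 1 ≤ d) (K : ℕ) (hK : 2 ≤ K)
    (μ : Measure (Rd d)) (μs : Fin K → Measure (Rd d))
    (hμ : IsProbabilityMeasure μ) (hμs : ∀ k, IsProbabilityMeasure (μs k))
    (hμm : FiniteMoment p μ) (hμsm : ∀ k, FiniteMoment p (μs k))
    (g : sphere (0 : Rd d) 1 → ℝ)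
    (hg : g = fun θ => ⨆ k, Wpp p (proj θ μ) (proj θ (μs k)))
    (hkint : ∀ k, Integrable (fun θ => Wpp p (proj θ μ) (proj θ (μs k))) (uniformSphere d))
    (hgmeas : Measurable g) (hgint : Integrable g (uniformSphere d))
    (hgeint : Integrable (fun θ => g θ * Real.exp (g θ)) (uniformSphere d)) :
    (⨆ k, ∫ θ, Wpp p (proj θ μ) (proj θ (μs k)) ∂(uniformSphere d)) ≤
      (∫ θ, g θ * Real.exp (g θ) ∂(uniformSphere d)) /
        (∫ θ, Real.exp (g θ) ∂(uniformSphere d)) :=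
  sf_le_esf_general p d hd K hK μ μs g hg hkint hgint hgeint
end
end
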